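/- arXiv:1709.06273 — 2 statements merged into one kernel-verified Lean document; each statement's English description precedes it below -/
import Mathlib

section
/- Let C be a category with zero morphisms, S : C ⥤ C an endofunctor, and natural transformations p : 𝟭_C ⟶ S and s₀, s₁ : S ⟶ 𝟭_C such that p ≫ s₀ = 𝟙 and p ≫ s₁ = 𝟙 (as natural transformations from 𝟭_C to 𝟭_C). Let A be an object of C such that p.app A is an isomorphism (A is 'A¹-invariant'), and let B be an object of C for which there exists a morphism h : B ⟶ S.obj B with h ≫ s₀.app B = 𝟙_B and h ≫ s₁.app B = 0 (B is 'A¹-contractible'). Then every morphism f : B ⟶ A is the zero morphism. -/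
open CategoryTheory Limits

/-! Precomposing `f : B ⟶ A` with `s₀` and `s₁` gives, by naturality, `S.map f ≫ s₀.app A` and
`S.map f ≫ s₁.app A`. These agree because `s₀.app A` and `s₁.app A` are both inverse to the
isomorphism `p.app A`; precomposed with the contraction `h` they become `f` and `0`. -/

namespace CategoryTheory.NatTrans

variable {C : Type*} [Category C] [HasZeroMorphisms C]

theorem eq_zero_of_app_eq_of_contraction {F : C ⥤ C} (s₀ s₁ : F ⟶ 𝟭 C) {A B : C}
    (hs : s₀.app A = s₁.app A) (h : B ⟶ F.obj B)
    (h0 : h ≫ s₀.app B = 𝟙 B) (h1 : h ≫ s₁.app B = 0) (f : B ⟶ A) : f = 0 :=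
  calc f = (h ≫ s₀.app B) ≫ f := by rw [h0, Category.id_comp]
    _ = h ≫ F.map f ≫ s₀.app A := by rw [Category.assoc, s₀.naturality f]; rfl
    _ = h ≫ F.map f ≫ s₁.app A := by rw [hs]
    _ = (h ≫ s₁.app B) ≫ f := by rw [Category.assoc, s₁.naturality f]; rfl
    _ = 0 := by rw [h1, zero_comp]

end CategoryTheory.NatTrans

/-- Abstract form of the orthogonality lemma (Lemma `lm:contrinvort`):
if `S` is an endofunctor with natural transformations `p : 𝟭 ⟶ S` and
`s₀ s₁ : S ⟶ 𝟭` satisfying `p ≫ s₀ = 𝟙` and `p ≫ s₁ = 𝟙`, then every map from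
an `𝔸¹`-contractible object `B` to an `𝔸¹`-invariant object `A` is zero. -/
theorem contractible_to_invariant_eq_zero
    {C : Type*} [Category C] [Limits.HasZeroMorphisms C]
    (S : C ⥤ C) (p : 𝟭 C ⟶ S) (s₀ s₁ : S ⟶ 𝟭 C)
    (hp0 : p ≫ s₀ = 𝟙 (𝟭 C)) (hp1 : p ≫ s₁ = 𝟙 (𝟭 C))
    (A : C) (hA : IsIso (p.app A))
    (B : C) (h : B ⟶ S.obj B)
    (h0 : h ≫ s₀.app B = 𝟙 B) (h1 : h ≫ s₁.app B = 0)
    (f : B ⟶ A) : f = 0 := by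
  have hs : s₀.app A = s₁.app A :=
    (cancel_epi (p.app A)).1 <| by
      rw [← NatTrans.comp_app, ← NatTrans.comp_app, hp0, hp1]
  exact NatTrans.eq_zero_of_app_eq_of_contraction s₀ s₁ hs h h0 h1 f
end

section
/- Let A and B be commutative rings, P a module with commuting A-module and B-module structures that is finitely generated and projective as an A-module, and Q a B-module that is finitely generated and projective as a B-module. Then the canonical A-linear map μ : Hom_B(Q, B) ⊗_B Hom_A(P, A) → Hom_A(Q ⊗_B P, A), determined by μ(g ⊗ f)(q ⊗ p) = f(g(q) · p) (where g(q) ∈ B acts on p via the B-module structure of P), is bijective. -/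
open scoped TensorProduct

section DomainModule

/-- The action of `S` on `M →ₗ[R] N` through the domain: `(s • f) m = f (s • m)`.
This is the module structure on duals used in the paper: `(b • g) (q) = g (b • q)`. -/
instance (priority := 50) LinearMap.domainModule
    {R S M N : Type*} [CommSemiring R] [CommSemiring S]
    [AddCommMonoid M] [AddCommMonoid N] [Module R M] [Module R N]
    [Module S M] [SMulCommClass S R M] : Module S (M →ₗ[R] N) where
  smul s f :=
    { toFun := fun m => f (s • m)
      map_add' := fun x y => by simp [smul_add]
      map_smul' := fun r x => by simp [smul_comm s r x] }
  one_smul f := by ext m; show f (1 • m) = f m; rw [one_smul]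
  mul_smul s t f := by
    ext m
    show f ((s * t) • m) = f (t • s • m)
    rw [mul_smul, smul_comm]
  smul_zero s := by ext m; rfl
  smul_add s f g := by ext m; rfl
  add_smul s t f := by
    ext m
    show f ((s + t) • m) = f (s • m) + f (t • m)
    rw [add_smul, map_add]
  zero_smul f := by ext m; show f (0 • m) = 0; rw [zero_smul, map_zero]

/-- The domain action of `S` commutes with the codomain action of `S'` on `M →ₗ[R] N`. -/
instance LinearMap.domainModule_smulCommClass
    {R S S' M N : Type*} [CommSemiring R] [CommSemiring S] [Semiring S']
    [AddCommMonoid M] [AddCommMonoid N] [Module R M] [Module R N]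
    [Module S M] [SMulCommClass S R M]
    [Module S' N] [SMulCommClass R S' N] :
    SMulCommClass S S' (M →ₗ[R] N) :=
  ⟨fun _ _ _ => LinearMap.ext fun _ => rfl⟩

end DomainModule

section RightModule

variable {B A M N : Type*} [CommSemiring B] [Semiring A]
  [AddCommMonoid M] [AddCommMonoid N] [Module B M] [Module B N]
  [Module A N] [SMulCommClass B A N]

/-- The scalar action of `A` on `M ⊗[B] N` through the right factor:
`a • (m ⊗ n) = m ⊗ (a • n)`. -/
noncomputable def TensorProduct.rightSMul (a : A) (x : M ⊗[B] N) : M ⊗[B] N :=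
  (TensorProduct.comm B M N).symm (a • (TensorProduct.comm B M N x))

/-- The module structure of `A` on `M ⊗[B] N` through the right factor:
`a • (m ⊗ n) = m ⊗ (a • n)`. -/
noncomputable instance (priority := 50) TensorProduct.rightModule :
    Module A (M ⊗[B] N) where
  smul := TensorProduct.rightSMul
  one_smul x := by
    show TensorProduct.rightSMul (1 : A) x = x
    simp [TensorProduct.rightSMul]
  mul_smul a b x := by
    show TensorProduct.rightSMul (a * b) x =
      TensorProduct.rightSMul a (TensorProduct.rightSMul b x)
    simp [TensorProduct.rightSMul, mul_smul]
  smul_zero a := by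
    show TensorProduct.rightSMul a (0 : M ⊗[B] N) = 0
    simp [TensorProduct.rightSMul]
  smul_add a x y := by
    show TensorProduct.rightSMul a (x + y) =
      TensorProduct.rightSMul a x + TensorProduct.rightSMul a y
    simp [TensorProduct.rightSMul, smul_add]
  add_smul a b x := by
    show TensorProduct.rightSMul (a + b) x =
      TensorProduct.rightSMul a x + TensorProduct.rightSMul b x
    simp [TensorProduct.rightSMul, add_smul]
  zero_smul x := by
    show TensorProduct.rightSMul (0 : A) x = 0
    simp [TensorProduct.rightSMul]

@[simp] theorem TensorProduct.rightModule_smul_tmul (a : A) (m : M) (n : N) :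
    a • (m ⊗ₜ[B] n) = m ⊗ₜ[B] (a • n) := by
  show TensorProduct.rightSMul a (m ⊗ₜ[B] n) = m ⊗ₜ[B] (a • n)
  simp [TensorProduct.rightSMul, TensorProduct.smul_tmul']

end RightModule

/-!
Since `Q` is finite projective over `B`, the canonical map `Hom_B(Q, B) ⊗_B M → Hom_B(Q, M)` is
bijective for every `B`-module `M` (`dualTensorHom_bijective`), and it is `A`-linear when `M`
carries a commuting `A`-action. Take `M = Hom_A(P, A)` and compose with the tensor-hom adjunction
`Hom_B(Q, Hom_A(P, A)) ≅ Hom_A(Q ⊗_B P, A)`, which is `A`-linear for the `A`-action on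
`Q ⊗_B P` through `P`.
-/

namespace TensorProduct

section RightLift

variable {A B P Q N : Type*} [CommSemiring A] [CommSemiring B]
  [AddCommMonoid P] [Module A P] [Module B P] [SMulCommClass B A P]
  [AddCommMonoid Q] [Module B Q] [AddCommMonoid N] [Module A N]

theorem rightModule_linearMap_ext {L₁ L₂ : Q ⊗[B] P →ₗ[A] N}
    (h : ∀ q p, L₁ (q ⊗ₜ p) = L₂ (q ⊗ₜ p)) : L₁ = L₂ := by
  ext x
  induction x using TensorProduct.induction_on with
  | zero => simp only [map_zero]
  | tmul q p => exact h q p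
  | add x y hx hy => rw [map_add, map_add, hx, hy]

noncomputable def rightLiftEquiv : (Q →ₗ[B] P →ₗ[A] N) ≃ₗ[A] (Q ⊗[B] P →ₗ[A] N) where
  toFun Φ :=
    { toFun := liftAddHom (LinearMap.toAddMonoidHom'.comp Φ.toAddMonoidHom)
        fun b q p => by
          show Φ (b • q) p = Φ q (b • p)
          rw [map_smul]
          rfl
      map_add' := map_add _
      map_smul' := fun a x => by
        induction x using TensorProduct.induction_on with
        | zero => simp only [smul_zero, map_zero]
        | tmul q p =>
          simp only [rightModule_smul_tmul, liftAddHom_tmul]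
          exact map_smul (Φ q) a p
        | add x y hx hy => simp_all only [smul_add, map_add] }
  invFun L :=
    { toFun := fun q =>
        { toFun := fun p => L (q ⊗ₜ p)
          map_add' := fun p p' => by rw [tmul_add, map_add]
          map_smul' := fun a p => by rw [← rightModule_smul_tmul, map_smul]; rfl }
      map_add' := fun q q' => by ext p; simp only [add_tmul, map_add]; rfl
      map_smul' := fun b q => by ext p; exact congrArg L (smul_tmul b q p) }
  map_add' Φ Ψ := rightModule_linearMap_ext fun q p => by simp
  map_smul' a Φ := rightModule_linearMap_ext fun q p => by simp
  left_inv Φ := rfl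
  right_inv L := rightModule_linearMap_ext fun q p => by simp

end RightLift

section DualTensorHomRight

variable {A B Q M : Type*} [CommSemiring A] [CommSemiring B]
  [AddCommMonoid Q] [Module B Q] [AddCommMonoid M] [Module B M] [Module A M] [SMulCommClass B A M]

variable (A B Q M) in
noncomputable def dualTensorHomRight : Module.Dual B Q ⊗[B] M →ₗ[A] (Q →ₗ[B] M) where
  toFun := dualTensorHom B Q M
  map_add' := map_add _
  map_smul' a x := by
    induction x using TensorProduct.induction_on with
    | zero => simp only [smul_zero, map_zero]
    | tmul g m => ext q; simp [smul_comm (g q) a m]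
    | add x y hx hy => simp_all only [smul_add, map_add]

end DualTensorHomRight

end TensorProduct

theorem dualTensorDual_bijective_general
    (A B P Q : Type*) [CommRing A] [CommRing B]
    [AddCommGroup P] [Module A P] [Module B P]
    [SMulCommClass B A P]
    [AddCommGroup Q] [Module B Q]
    [Module.Finite B Q] [Module.Projective B Q] :
    ∃ μ : ((Q →ₗ[B] B) ⊗[B] (P →ₗ[A] A)) →ₗ[A] ((Q ⊗[B] P) →ₗ[A] A),
      (∀ (g : Q →ₗ[B] B) (f : P →ₗ[A] A) (q : Q) (p : P),
        μ (g ⊗ₜ[B] f) (q ⊗ₜ[B] p) = f (g q • p)) ∧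
      Function.Bijective μ :=
  ⟨TensorProduct.rightLiftEquiv.toLinearMap ∘ₗ
      TensorProduct.dualTensorHomRight A B Q (P →ₗ[A] A),
    fun _ _ _ _ => rfl,
    TensorProduct.rightLiftEquiv.bijective.comp dualTensorHom_bijective⟩

/-- For commuting `A`- and `B`-module structures on `P` with `P` finite projective over `A`,
and `Q` finite projective over `B`, the canonical `A`-linear map
`Hom_B(Q, B) ⊗[B] Hom_A(P, A) → Hom_A(Q ⊗[B] P, A)`, determined by
`μ (g ⊗ f) (q ⊗ p) = f (g q • p)`, is bijective. Here `Hom_B(Q, B)` and `Hom_A(P, A)` carry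
the `B`-module structures `(b • g) q = g (b • q)` (for `Hom_A(P, A)`, via the `B`-action on
`P`), and `Q ⊗[B] P` carries the `A`-module structure `a • (q ⊗ p) = q ⊗ (a • p)`. -/
theorem dualTensorDual_bijective
    (A B P Q : Type*) [CommRing A] [CommRing B]
    [AddCommGroup P] [Module A P] [Module B P]
    [SMulCommClass A B P] [SMulCommClass B A P]
    [AddCommGroup Q] [Module B Q]
    [Module.Finite A P] [Module.Projective A P]
    [Module.Finite B Q] [Module.Projective B Q] :
    ∃ μ : ((Q →ₗ[B] B) ⊗[B] (P →ₗ[A] A)) →ₗ[A] ((Q ⊗[B] P) →ₗ[A] A),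
      (∀ (g : Q →ₗ[B] B) (f : P →ₗ[A] A) (q : Q) (p : P),
        μ (g ⊗ₜ[B] f) (q ⊗ₜ[B] p) = f (g q • p)) ∧
      Function.Bijective μ :=
  dualTensorDual_bijective_general A B P Q
end
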